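/- arXiv:math/0404230 — 4 statements merged into one kernel-verified Lean document; each statement's English description precedes it below -/
import Mathlib

section
/- Let δ ∈ [0,1] and let (t_n) be a sequence in [0,1] converging to δ. Then there exists a sequence (t̂_n) in (0,1] such that (i) t_n ≤ t̂_n for all n, (ii) t̂_n decreases monotonically to δ, and (iii) lim_{n→∞} (1/n) log t̂_n exists and equals limsup_{n→∞} (1/n) log t_n (where log 0 = -∞). -/
/-!
Replace `t` by its tail suprema `s n = sup_{k ≥ n} t k`, which decrease to `δ`, and set
`t̂ n = max (s n) (exp (c n))` for a sequence `c n` decreasing to `-∞` with `c n / n → L`, where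
`L = limsup (1/n) log t n`. Then `(1/n) log t̂ n ≥ c n / n`, and since `log t k ≤ 0`,
`(1/n) log s n ≤ sup_{k ≥ n} (1/k) log t k`, whose limit is `L`.
-/

open Filter Topology

/-- Extended-real logarithm with the convention `log 0 = -∞` (for nonnegative inputs). -/
noncomputable def elog (x : ℝ) : EReal := if x ≤ 0 then ⊥ else ((Real.log x : ℝ) : EReal)

lemma elog_eq_comp : elog = ENNReal.log ∘ ENNReal.ofReal :=
  funext fun x => (ENNReal.log_ofReal x).symm

lemma elog_monotone : Monotone elog :=
  elog_eq_comp ▸ ENNReal.log_monotone.comp ENNReal.ofReal_mono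

lemma continuous_elog : Continuous elog :=
  elog_eq_comp ▸ ENNReal.continuous_log.comp ENNReal.continuous_ofReal

lemma elog_nonpos {x : ℝ} (hx : x ≤ 1) : elog x ≤ 0 := by
  rw [elog_eq_comp]
  exact ENNReal.log_le_zero_iff.2 (ENNReal.ofReal_le_one.2 hx)

lemma elog_exp (r : ℝ) : elog (Real.exp r) = r := by
  rw [elog, if_neg (Real.exp_pos r).not_ge, Real.log_exp]

lemma elog_ciSup {ι : Sort*} [Nonempty ι] {u : ι → ℝ} (hu : BddAbove (Set.range u)) :
    elog (⨆ i, u i) = ⨆ i, elog (u i) :=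
  elog_monotone.map_ciSup_of_continuousAt continuous_elog.continuousAt hu

lemma EReal.le_coe_mul_of_nonpos_of_le_one {c : ℝ} (hc₀ : 0 ≤ c) (hc₁ : c ≤ 1) {x : EReal}
    (hx : x ≤ 0) : x ≤ c * x := by
  induction x using EReal.rec with
  | bot =>
    rcases hc₀.eq_or_lt with rfl | hc
    · simp
    · rw [EReal.coe_mul_bot_of_pos hc]
  | coe x =>
    rw [← EReal.coe_mul, EReal.coe_le_coe_iff]
    nlinarith [EReal.coe_nonpos.1 hx]
  | top => exact absurd hx (by simp)

noncomputable def logRate (u : ℕ → ℝ) (n : ℕ) : EReal :=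
  ((1 / (n : ℝ) : ℝ) : EReal) * elog (u n)

section LogRate

variable {u : ℕ → ℝ}

lemma logRate_nonpos {n : ℕ} (hu : u n ≤ 1) : logRate u n ≤ 0 :=
  mul_nonpos_of_nonneg_of_nonpos (by positivity) (elog_nonpos hu)

lemma logRate_max (f g : ℕ → ℝ) (n : ℕ) :
    logRate (fun k => max (f k) (g k)) n = max (logRate f n) (logRate g n) := by
  have hmono : Monotone fun y : EReal => ((1 / (n : ℝ) : ℝ) : EReal) * y :=
    fun _ _ h => mul_le_mul_of_nonneg_left h (by positivity)
  rw [logRate, elog_monotone.map_max, hmono.map_max]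
  rfl

lemma logRate_exp (c : ℕ → ℝ) (n : ℕ) :
    logRate (fun k => Real.exp (c k)) n = ((c n / n : ℝ) : EReal) := by
  rw [logRate, elog_exp, ← EReal.coe_mul, one_div_mul_eq_div]

lemma elog_le_mul_logRate {n k : ℕ} (hu : u k ≤ 1) (hnk : n ≤ k) :
    elog (u k) ≤ ((n : ℝ) : EReal) * logRate u k := by
  rw [logRate, ← mul_assoc, ← EReal.coe_mul, mul_one_div]
  exact EReal.le_coe_mul_of_nonpos_of_le_one (by positivity)
    (div_le_one_of_le₀ (Nat.cast_le.2 hnk) (Nat.cast_nonneg k)) (elog_nonpos hu)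

end LogRate

def tailSup {α : Type*} [SupSet α] (u : ℕ → α) (n : ℕ) : α :=
  ⨆ k, u (k + n)

section TailSup

variable {α : Type*}

section Lattice

variable [ConditionallyCompleteLattice α] {u : ℕ → α}

lemma BddAbove.range_shift (hu : BddAbove (Set.range u)) (n : ℕ) :
    BddAbove (Set.range fun k => u (k + n)) :=
  hu.mono (Set.range_comp_subset_range (· + n) u)

lemma le_tailSup (hu : BddAbove (Set.range u)) (n : ℕ) : u n ≤ tailSup u n := by
  simpa [tailSup] using le_ciSup (hu.range_shift n) 0

lemma tailSup_le {b : α} (h : ∀ n, u n ≤ b) (n : ℕ) : tailSup u n ≤ b :=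
  ciSup_le fun _ => h _

lemma antitone_tailSup (hu : BddAbove (Set.range u)) : Antitone (tailSup u) :=
  antitone_nat_of_succ_le fun n => ciSup_le fun k => by
    rw [show k + (n + 1) = (k + 1) + n by omega]
    exact le_ciSup (hu.range_shift n) (k + 1)

end Lattice

lemma tendsto_tailSup_of_tendsto [ConditionallyCompleteLinearOrder α] [TopologicalSpace α]
    [OrderTopology α] [DenselyOrdered α] {u : ℕ → α} {a : α} (hu : BddAbove (Set.range u))
    (h : Tendsto u atTop (𝓝 a)) : Tendsto (tailSup u) atTop (𝓝 a) := by
  have ha : ∀ n, a ≤ tailSup u n := fun n =>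
    le_of_tendsto' (h.comp (tendsto_add_atTop_nat n)) fun k => le_ciSup (hu.range_shift n) k
  refine tendsto_order.2 ⟨fun b hb => Eventually.of_forall fun n => hb.trans_le (ha n), ?_⟩
  intro b hb
  obtain ⟨m, ham, hmb⟩ := exists_between hb
  obtain ⟨N, hN⟩ := eventually_atTop.1 (h.eventually (gt_mem_nhds ham))
  filter_upwards [eventually_ge_atTop N] with n hn
  exact (ciSup_le fun k => (hN (k + n) (by omega)).le).trans_lt hmb

lemma tendsto_tailSup_limsup [CompleteLinearOrder α] [TopologicalSpace α] [OrderTopology α]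
    (u : ℕ → α) : Tendsto (tailSup u) atTop (𝓝 (limsup u atTop)) := by
  rw [limsup_eq_iInf_iSup_of_nat']
  exact tendsto_atTop_iInf (antitone_tailSup (OrderTop.bddAbove _))

end TailSup

lemma logRate_tailSup_le {u : ℕ → ℝ} (hu : ∀ k, u k ≤ 1) (n : ℕ) :
    logRate (tailSup u) n ≤ tailSup (logRate u) n := by
  rcases n.eq_zero_or_pos with rfl | hn
  · -- `1 / 0 = 0` in `ℝ` and `0 * ⊥ = 0` in `EReal`, so every `logRate _ 0` vanishes.
    have h0 : logRate (tailSup u) 0 = 0 := by simp [logRate]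
    rw [h0]
    exact le_iSup_of_le 0 (by simp [logRate])
  have hbdd : BddAbove (Set.range u) := ⟨1, Set.forall_mem_range.2 hu⟩
  have hn' : (0 : ℝ) < n := Nat.cast_pos.2 hn
  have key : elog (tailSup u n) ≤ ((n : ℝ) : EReal) * tailSup (logRate u) n := by
    rw [tailSup, elog_ciSup (hbdd.range_shift n)]
    exact iSup_le fun k => (elog_le_mul_logRate (hu _) (Nat.le_add_left n k)).trans
      (mul_le_mul_of_nonneg_left (le_iSup (fun k => logRate u (k + n)) k) (by positivity))
  calc logRate (tailSup u) n
      ≤ ((1 / (n : ℝ) : ℝ) : EReal) * (((n : ℝ) : EReal) * tailSup (logRate u) n) :=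
        mul_le_mul_of_nonneg_left key (by positivity)
    _ = tailSup (logRate u) n := by
        rw [← mul_assoc, ← EReal.coe_mul, one_div_mul_cancel hn'.ne', EReal.coe_one, one_mul]

lemma exists_antitone_tendsto_div_natCast {L : EReal} (hL : L ≤ 0) :
    ∃ c : ℕ → ℝ, Antitone c ∧ (∀ n, c n ≤ 0) ∧ Tendsto c atTop atBot ∧
      Tendsto (fun n : ℕ => ((c n / n : ℝ) : EReal)) atTop (𝓝 L) := by
  have hsqrt : Tendsto (fun n : ℕ => √(n : ℝ)) atTop atTop :=
    Real.tendsto_sqrt_atTop.comp tendsto_natCast_atTop_atTop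
  induction L using EReal.rec with
  | bot =>
    refine ⟨fun n => -(n : ℝ) ^ 2, fun m n h => ?_, fun n => by simp, ?_, ?_⟩
    · exact neg_le_neg (pow_le_pow_left₀ (Nat.cast_nonneg _) (Nat.cast_le.2 h) 2)
    · exact tendsto_neg_atBot_iff.2
        ((tendsto_pow_atTop two_ne_zero).comp tendsto_natCast_atTop_atTop)
    · have hdiv : (fun n : ℕ => -(n : ℝ) ^ 2 / n) = fun n : ℕ => -(n : ℝ) := by
        ext n; rw [neg_div, sq, mul_self_div_self]
      rw [EReal.tendsto_coe_nhds_bot_iff, hdiv]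
      exact tendsto_neg_atBot_iff.2 tendsto_natCast_atTop_atTop
  | coe r =>
    have hr : r ≤ 0 := EReal.coe_nonpos.1 hL
    refine ⟨fun n => n * r - √n, fun m n h => ?_, fun n => ?_, ?_, ?_⟩
    · exact sub_le_sub (mul_le_mul_of_nonpos_right (Nat.cast_le.2 h) hr)
        (Real.sqrt_le_sqrt (Nat.cast_le.2 h))
    · exact sub_nonpos_of_le
        ((mul_nonpos_of_nonneg_of_nonpos n.cast_nonneg hr).trans (Real.sqrt_nonneg _))
    · refine tendsto_atBot_mono (fun n => ?_) (tendsto_neg_atBot_iff.2 hsqrt)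
      linarith [mul_nonpos_of_nonneg_of_nonpos (Nat.cast_nonneg n) hr]
    · rw [EReal.tendsto_coe]
      have hlim : Tendsto (fun n : ℕ => r - 1 / √(n : ℝ)) atTop (𝓝 (r - 0)) :=
        tendsto_const_nhds.sub (tendsto_const_nhds.div_atTop hsqrt)
      rw [sub_zero] at hlim
      refine hlim.congr' ?_
      filter_upwards [eventually_ge_atTop 1] with n hn
      rw [sub_div, mul_div_cancel_left₀ _ (Nat.cast_ne_zero.2 (by omega)), Real.sqrt_div_self']
  | top => exact absurd hL (by simp)

theorem stmt0_general (δ : ℝ)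
    (t : ℕ → ℝ) (ht : ∀ n, t n ∈ Set.Icc (0:ℝ) 1)
    (hconv : Tendsto t atTop (nhds δ)) :
    ∃ that : ℕ → ℝ,
      (∀ n, that n ∈ Set.Ioc (0:ℝ) 1) ∧
      (∀ n, t n ≤ that n) ∧
      Antitone that ∧
      Tendsto that atTop (nhds δ) ∧
      Tendsto (fun n : ℕ => ((1 / (n:ℝ) : ℝ) : EReal) * elog (that n)) atTop
        (nhds (Filter.limsup (fun n : ℕ => ((1 / (n:ℝ) : ℝ) : EReal) * elog (t n)) atTop)) := by
  have ht1 : ∀ n, t n ≤ 1 := fun n => (ht n).2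
  have hbdd : BddAbove (Set.range t) := ⟨1, Set.forall_mem_range.2 ht1⟩
  have hL : limsup (logRate t) atTop ≤ 0 :=
    limsup_le_of_le (by isBoundedDefault) (Eventually.of_forall fun n => logRate_nonpos (ht1 n))
  obtain ⟨c, hc_anti, hc_nonpos, hc_atBot, hc_div⟩ := exists_antitone_tendsto_div_natCast hL
  refine ⟨fun n => max (tailSup t n) (Real.exp (c n)),
    fun n => ⟨(Real.exp_pos _).trans_le (le_max_right _ _),
      max_le (tailSup_le ht1 n) (Real.exp_le_one_iff.2 (hc_nonpos n))⟩,
    fun n => (le_tailSup hbdd n).trans (le_max_left _ _),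
    (antitone_tailSup hbdd).max (Real.exp_monotone.comp_antitone hc_anti), ?_, ?_⟩
  · have hδ : 0 ≤ δ := ge_of_tendsto' hconv fun n => (ht n).1
    simpa [max_eq_left hδ] using
      (tendsto_tailSup_of_tendsto hbdd hconv).max (Real.tendsto_exp_atBot.comp hc_atBot)
  · change Tendsto (logRate _) atTop (𝓝 (limsup (logRate t) atTop))
    have hupper := (tendsto_tailSup_limsup (logRate t)).max hc_div
    rw [max_self] at hupper
    refine tendsto_of_tendsto_of_tendsto_of_le_of_le hc_div hupper (fun n => ?_) (fun n => ?_) <;>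
      rw [logRate_max, logRate_exp]
    · exact le_max_right _ _
    · exact max_le_max (logRate_tailSup_le ht1 n) le_rfl

theorem stmt0 (δ : ℝ) (hδ : δ ∈ Set.Icc (0:ℝ) 1)
    (t : ℕ → ℝ) (ht : ∀ n, t n ∈ Set.Icc (0:ℝ) 1)
    (hconv : Tendsto t atTop (nhds δ)) :
    ∃ that : ℕ → ℝ,
      (∀ n, that n ∈ Set.Ioc (0:ℝ) 1) ∧
      (∀ n, t n ≤ that n) ∧
      Antitone that ∧
      Tendsto that atTop (nhds δ) ∧
      Tendsto (fun n : ℕ => ((1 / (n:ℝ) : ℝ) : EReal) * elog (that n)) atTop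
        (nhds (Filter.limsup (fun n : ℕ => ((1 / (n:ℝ) : ℝ) : EReal) * elog (t n)) atTop)) :=
  stmt0_general δ t ht hconv
end

section
/- Let M ≥ 2, and for each pair of distinct indices a,b in {1,...,M} let v(a,b) ∈ [-∞,0]. Define, for distinct i,j, U₀(i,j) = max over 0 ≤ k ≤ M-2 and over (k+2)-tuples L = (i = l₀, l₁, ..., l_k, l_{k+1} = j) of distinct indices, of Σ_{s=0}^{k} v(l_s, l_{s+1}). Then U₀ satisfies the reverse triangle inequality: for any three distinct indices i, j, k, U₀(i,j) + U₀(j,k) ≤ U₀(i,k). -/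
/-!
Concatenating a best path from `i` to `j` with one from `j` to `k` gives a walk from `i` to `k`
with no immediate repetitions. Whenever such a walk revisits a vertex, the segment between the
two visits is a closed walk, whose weight is `≤ 0` because `v` is nonpositive off the diagonal;
cutting it out therefore does not lower the total weight. Repeating this yields a self-avoiding
path from `i` to `k` at least as heavy as the two original paths together.
-/

/-- Sum of the weights `v` along the consecutive pairs of a list of indices. -/
noncomputable def pathSum {M : ℕ} (v : Fin M → Fin M → EReal) (l : List (Fin M)) : EReal :=
  (List.zipWith v l l.tail).sum

/-- `U0 v i j` is the maximal total weight of a self-avoiding path from `i` to `j`. -/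
noncomputable def U0 {M : ℕ} (v : Fin M → Fin M → EReal) (i j : Fin M) : EReal :=
  sSup { s : EReal | ∃ l : List (Fin M), l.Nodup ∧ l.head? = some i ∧ l.getLast? = some j ∧
    2 ≤ l.length ∧ s = pathSum v l }

section PathSum

variable {M : ℕ} (v : Fin M → Fin M → EReal)

lemma pathSum_cons_cons (a b : Fin M) (l : List (Fin M)) :
    pathSum v (a :: b :: l) = v a b + pathSum v (b :: l) := by
  simp [pathSum]

lemma pathSum_append_cons (a : Fin M) :
    ∀ l₁ l₂ : List (Fin M),
      pathSum v (l₁ ++ a :: l₂) = pathSum v (l₁ ++ [a]) + pathSum v (a :: l₂)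
  | [], _ => by simp [pathSum]
  | [_], _ => by simp [pathSum]
  | b :: c :: t, l₂ => by
    have ih := pathSum_append_cons a (c :: t) l₂
    simp only [List.cons_append] at ih ⊢
    rw [pathSum_cons_cons, pathSum_cons_cons, ih, add_assoc]

variable {v}

lemma pathSum_nonpos (hv : ∀ a b, a ≠ b → v a b ≤ 0) :
    ∀ l : List (Fin M), l.IsChain (· ≠ ·) → pathSum v l ≤ 0
  | [], _ => le_rfl
  | [_], _ => le_rfl
  | a :: b :: l, h => by
    obtain ⟨hab, hl⟩ := List.isChain_cons_cons.mp h
    rw [pathSum_cons_cons]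
    exact add_nonpos (hv a b hab) (pathSum_nonpos hv (b :: l) hl)

lemma exists_nodup_pathSum_le (hv : ∀ a b, a ≠ b → v a b ≤ 0) :
    ∀ l : List (Fin M), l.IsChain (· ≠ ·) → ∃ l' : List (Fin M), l'.Nodup ∧
      l'.head? = l.head? ∧ l'.getLast? = l.getLast? ∧ pathSum v l ≤ pathSum v l'
  | [], _ => ⟨[], List.nodup_nil, rfl, rfl, le_rfl⟩
  | [a], _ => ⟨[a], List.nodup_singleton a, rfl, rfl, le_rfl⟩
  | a :: b :: t, h => by
    obtain ⟨hab, ht⟩ := List.isChain_cons_cons.mp h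
    obtain ⟨t', ht'_nodup, ht'_head, ht'_last, ht'_sum⟩ := exists_nodup_pathSum_le hv (b :: t) ht
    obtain ⟨t'', rfl⟩ : ∃ t'', t' = b :: t'' := List.head?_eq_some_iff.mp ht'_head
    have hsum : pathSum v (a :: b :: t) ≤ pathSum v (a :: b :: t'') := by
      rw [pathSum_cons_cons, pathSum_cons_cons]
      gcongr
    by_cases ha : a ∈ b :: t''
    · obtain ⟨s, r, hsr⟩ := List.append_of_mem ha
      have hchain : (a :: (s ++ [a])).IsChain (· ≠ ·) := by
        have : (a :: b :: t'').IsChain (· ≠ ·) :=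
          List.isChain_cons_cons.mpr ⟨hab, ht'_nodup.isChain⟩
        rw [hsr] at this
        exact this.prefix ⟨r, by simp⟩
      refine ⟨a :: r, ?_, rfl, ?_, hsum.trans ?_⟩
      · exact (hsr ▸ ht'_nodup).sublist (List.sublist_append_right s (a :: r))
      · rw [List.getLast?_cons_cons, ← ht'_last, hsr, List.getLast?_append_cons]
      · calc pathSum v (a :: b :: t'')
            = pathSum v (a :: (s ++ [a])) + pathSum v (a :: r) := by
              rw [hsr, ← List.cons_append, pathSum_append_cons, List.cons_append]
          _ ≤ 0 + pathSum v (a :: r) := by gcongr; exact pathSum_nonpos hv _ hchain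
          _ = pathSum v (a :: r) := zero_add _
    · exact ⟨a :: b :: t'', ht'_nodup.cons ha, rfl, by simpa using ht'_last, hsum⟩

end PathSum

section U0

variable {M : ℕ} {v : Fin M → Fin M → EReal} {i k : Fin M} {l : List (Fin M)}

lemma pathSum_le_U0 (hik : i ≠ k) (hl : l.Nodup) (hi : l.head? = some i)
    (hk : l.getLast? = some k) : pathSum v l ≤ U0 v i k := by
  refine le_sSup ⟨l, hl, hi, hk, ?_, rfl⟩
  match l, hi, hk with
  | [_], hi, hk => simp_all
  | _ :: _ :: _, _, _ => simp

lemma pathSum_le_U0_of_isChain (hv : ∀ a b, a ≠ b → v a b ≤ 0) (hik : i ≠ k)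
    (hl : l.IsChain (· ≠ ·)) (hi : l.head? = some i) (hk : l.getLast? = some k) :
    pathSum v l ≤ U0 v i k := by
  obtain ⟨l', hl', hi', hk', hsum⟩ := exists_nodup_pathSum_le hv l hl
  exact hsum.trans (pathSum_le_U0 hik hl' (hi'.trans hi) (hk'.trans hk))

end U0

theorem stmt4_general (M : ℕ) (v : Fin M → Fin M → EReal)
    (hv : ∀ a b : Fin M, a ≠ b → v a b ≤ 0)
    (i j k : Fin M) (hik : i ≠ k) :
    U0 v i j + U0 v j k ≤ U0 v i k := by
  refine EReal.add_le_of_forall_lt fun a ha b hb => ?_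
  obtain ⟨_, ⟨p, hp, hpi, hpj, -, rfl⟩, hap⟩ := lt_sSup_iff.mp ha
  obtain ⟨_, ⟨q, hq, hqj, hqk, -, rfl⟩, hbq⟩ := lt_sSup_iff.mp hb
  obtain ⟨p', rfl⟩ := List.getLast?_eq_some_iff.mp hpj
  obtain ⟨q', rfl⟩ := List.head?_eq_some_iff.mp hqj
  have hchain : (p' ++ j :: q').IsChain (· ≠ ·) := by
    simpa using hp.isChain.append_overlap hq.isChain (List.cons_ne_nil j [])
  calc a + b ≤ pathSum v (p' ++ [j]) + pathSum v (j :: q') := add_le_add hap.le hbq.le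
    _ = pathSum v (p' ++ j :: q') := (pathSum_append_cons v j p' q').symm
    _ ≤ U0 v i k := pathSum_le_U0_of_isChain hv hik hchain
        (by cases p' <;> simp_all) (by rwa [List.getLast?_append_cons])

theorem stmt4 (M : ℕ) (hM : 2 ≤ M) (v : Fin M → Fin M → EReal)
    (hv : ∀ a b : Fin M, a ≠ b → v a b ≤ 0)
    (i j k : Fin M) (hij : i ≠ j) (hjk : j ≠ k) (hik : i ≠ k) :
    U0 v i j + U0 v j k ≤ U0 v i k :=
  stmt4_general M v hv i j k hik
end

section
/- Let M ≥ 1, let ζ₁,...,ζ_M index sets, let U : {1,...,M}² → [-∞,0] be nonpositive, and for each i let I_i : ℝ^d → [0,∞] be a good rate function whose domain of finiteness Q_i is a nonempty compact subset of a fixed compact cube K ⊂ ℝ^d. For M ≥ 2 define, for z ∈ ℝ^d, J_U(z) = min over permutations σ of {1,...,M}, inf over probability vectors v ∈ Ω_M, inf over x ∈ (ℝ^d)^M with Σ v_i x_i = z, of [ −Σ_{i=1}^{M-1}(Σ_{j=1}^i v_j) U(σ(i),σ(i+1)) + Σ_{i=1}^M v_i I_{σ(i)}(x_i) ]; for M =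 1, J_U = I₁. Then J_U is a good rate function (nonnegative, lower semicontinuous, with compact level sets), J_U ≤ min_i I_i pointwise, and its domain of finiteness is contained in K. -/
/-- The rate function `J_U`: optimization over a visiting order `σ`, time proportions `v`
in the probability simplex, and locations `x` with `∑ v i • x i = z`, of the total
routing cost plus resting cost. -/
noncomputable def JU (d M : ℕ) (U : Fin M → Fin M → EReal)
    (I : Fin M → (Fin d → ℝ) → EReal) (z : Fin d → ℝ) : EReal :=
  sInf { c : EReal | ∃ (σ : Equiv.Perm (Fin M)) (v : Fin M → ℝ) (x : Fin M → Fin d → ℝ),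
    (∀ i, v i ∈ Set.Icc (0:ℝ) 1) ∧ (∑ i, v i) = 1 ∧ (∑ i, v i • x i) = z ∧
    c = -(∑ i : Fin M, ∑ j : Fin M,
            if (j:ℕ) = (i:ℕ) + 1 then
              ((∑ k ∈ Finset.univ.filter (fun k : Fin M => (k:ℕ) ≤ (i:ℕ)), v k : ℝ) : EReal)
                * U (σ i) (σ j)
            else 0)
        + ∑ i : Fin M, ((v i : ℝ) : EReal) * I (σ i) (x i) }

/-!
For a fixed visiting order `σ`, the objective is a function `cost σ` of the weights `v` and the
sites `x`; on nonnegative weights it is a finite sum of products of nonnegative lower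
semicontinuous terms, hence lower semicontinuous. A site with positive weight and finite cost lies
in the domain of some `I_i`, hence in the cube `K`, while sites of zero weight change neither
`∑ v i • x i` nor the cost. So `{J_U < b}` lies in the image under `(v, x) ↦ ∑ v i • x i` of the
compact sets `{cost σ ≤ b} ∩ (Δ × K^M)`, and this image lies in `{J_U ≤ b}`. Each level set
`{J_U ≤ a}` is therefore the intersection of these compact images over `b > a`, and convexity of
`K` keeps them inside `K`. Putting all the weight on the last visited site, with `σ` placing `i`
there, gives `J_U ≤ I_i`.
-/

open Set Filter Topology

section Semicontinuity

variable {α : Type*} [TopologicalSpace α]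

lemma EReal.neg_sum_of_nonpos {ι : Type*} {s : Finset ι} {f : ι → EReal}
    (hf : ∀ i ∈ s, f i ≤ 0) : -∑ i ∈ s, f i = ∑ i ∈ s, -f i := by
  classical
  induction s using Finset.induction_on with
  | empty => simp
  | insert a s ha ih =>
    rw [Finset.forall_mem_insert] at hf
    have hs : ∑ i ∈ s, f i ≠ ⊤ := (Finset.sum_nonpos hf.2).trans_lt zero_lt_top |>.ne
    rw [Finset.sum_insert ha, Finset.sum_insert ha, neg_add (.inr hs)
      (.inl (hf.1.trans_lt zero_lt_top).ne), sub_eq_add_neg, ih hf.2]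

lemma LowerSemicontinuousOn.ereal_mul {f g : α → EReal} {s : Set α}
    (hf : LowerSemicontinuousOn f s) (hg : LowerSemicontinuousOn g s)
    (hf₀ : ∀ x ∈ s, 0 ≤ f x) (hg₀ : ∀ x ∈ s, 0 ≤ g x) :
    LowerSemicontinuousOn (fun x => f x * g x) s := by
  intro x hx y (hy : y < f x * g x)
  rcases lt_or_ge y 0 with hy₀ | hy₀
  · filter_upwards [self_mem_nhdsWithin] with z hz
    exact hy₀.trans_le (mul_nonneg (hf₀ z hz) (hg₀ z hz))
  have hfx : 0 < f x := (hf₀ x hx).lt_of_ne fun h => by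
    rw [← h, zero_mul] at hy; exact hy.not_ge hy₀
  have hgx : 0 < g x := (hg₀ x hx).lt_of_ne fun h => by
    rw [← h, mul_zero] at hy; exact hy.not_ge hy₀
  -- multiplication is continuous at a pair of positive values and monotone on nonnegative ones
  have hcont : ContinuousAt (fun p : EReal × EReal => p.1 * p.2) (f x, g x) :=
    EReal.continuousAt_mul (.inl hfx.ne') (.inl hfx.ne') (.inr hgx.ne') (.inr hgx.ne')
  obtain ⟨u, hu, v, hv, huv⟩ := mem_nhds_prod_iff.1 (hcont (Ioi_mem_nhds hy))
  obtain ⟨a, ha, hau⟩ := exists_Ioc_subset_of_mem_nhds hu ⟨0, hfx⟩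
  obtain ⟨b, hb, hbv⟩ := exists_Ioc_subset_of_mem_nhds hv ⟨0, hgx⟩
  filter_upwards [hf x hx a ha, hg x hx b hb, self_mem_nhdsWithin] with z hfz hgz hz
  calc y < min (f z) (f x) * min (g z) (g x) :=
        huv (mk_mem_prod (hau ⟨lt_min hfz ha, min_le_right _ _⟩)
          (hbv ⟨lt_min hgz hb, min_le_right _ _⟩))
    _ ≤ f z * g z := mul_le_mul (min_le_left _ _) (min_le_left _ _)
        (le_min (hg₀ z hz) hgx.le) (hf₀ z hz)

lemma LowerSemicontinuousOn.ereal_add {f g : α → EReal} {s : Set α}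
    (hf : LowerSemicontinuousOn f s) (hg : LowerSemicontinuousOn g s)
    (hf₀ : ∀ x ∈ s, 0 ≤ f x) (hg₀ : ∀ x ∈ s, 0 ≤ g x) :
    LowerSemicontinuousOn (fun x => f x + g x) s :=
  hf.add' hg fun x hx => EReal.continuousAt_add
    (.inr (EReal.bot_lt_zero.trans_le (hg₀ x hx)).ne')
    (.inl (EReal.bot_lt_zero.trans_le (hf₀ x hx)).ne')

lemma lowerSemicontinuousOn_ereal_sum {ι : Type*} {t : Finset ι} {f : ι → α → EReal}
    {s : Set α} (hf : ∀ i ∈ t, LowerSemicontinuousOn (f i) s)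
    (hf₀ : ∀ i ∈ t, ∀ x ∈ s, 0 ≤ f i x) :
    LowerSemicontinuousOn (fun x => ∑ i ∈ t, f i x) s := by
  classical
  induction t using Finset.induction_on with
  | empty => simpa using lowerSemicontinuousOn_const
  | insert a t ha ih =>
    rw [Finset.forall_mem_insert] at hf hf₀
    simp only [Finset.sum_insert ha]
    exact hf.1.ereal_add (ih hf.2 hf₀.2) hf₀.1
      fun x hx => Finset.sum_nonneg fun i hi => hf₀.2 i hi x hx

lemma EReal.lowerSemicontinuous_of_isClosed_setOf_le_coe {f : α → EReal}
    (hf : ∀ a : ℝ, IsClosed {x | f x ≤ a}) : LowerSemicontinuous f := by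
  refine lowerSemicontinuous_iff_isClosed_preimage.2 fun y => ?_
  induction y using EReal.rec with
  | bot =>
    have : f ⁻¹' Iic ⊥ = ⋂ a : ℝ, {x | f x ≤ a} := by
      ext x; simpa using (le_of_forall_lt_iff_le (x := ⊥) (y := f x)).symm
    exact this ▸ isClosed_iInter hf
  | coe a => exact hf a
  | top => simp

lemma EReal.isCompact_setOf_le_of_forall_lt {Z : Type*} [TopologicalSpace Z] [T2Space Z]
    {f : Z → EReal} {T : ℝ → Set Z} (hT : ∀ b, IsCompact (T b))
    (hlt : ∀ (b : ℝ) z, f z < b → z ∈ T b) (hle : ∀ b, ∀ z ∈ T b, f z ≤ b) (a : ℝ) :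
    IsCompact {z | f z ≤ a} := by
  have : {z | f z ≤ a} = ⋂ b ∈ Ioi a, T b := by
    ext z
    simp only [mem_iInter, mem_Ioi]
    refine ⟨fun h b hb => hlt b z (h.trans_lt (EReal.coe_lt_coe_iff.2 hb)), fun h => ?_⟩
    refine le_of_forall_lt_iff_le.1 fun b hb => hle b z (h b (EReal.coe_lt_coe_iff.1 hb))
  rw [this]
  exact (hT (a + 1)).of_isClosed_subset (isClosed_biInter fun b _ => (hT b).isClosed)
    (biInter_subset_of_mem (by simp : a + 1 ∈ Ioi a))

end Semicontinuity

open Finset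

section RateFunction

variable {d M : ℕ} (U : Fin M → Fin M → EReal) (I : Fin M → (Fin d → ℝ) → EReal)

noncomputable def weightedSum (p : (Fin M → ℝ) × (Fin M → Fin d → ℝ)) : Fin d → ℝ :=
  ∑ i, p.1 i • p.2 i

noncomputable def routeCost (σ : Equiv.Perm (Fin M)) (v : Fin M → ℝ) : EReal :=
  -(∑ i : Fin M, ∑ j : Fin M,
      if (j:ℕ) = (i:ℕ) + 1 then
        ((∑ k ∈ univ.filter (fun k : Fin M => (k:ℕ) ≤ (i:ℕ)), v k : ℝ) : EReal) * U (σ i) (σ j)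
      else 0)

noncomputable def routeTerm (σ : Equiv.Perm (Fin M)) (v : Fin M → ℝ) (i j : Fin M) : EReal :=
  if (j:ℕ) = (i:ℕ) + 1 then
    ((∑ k ∈ univ.filter (fun k : Fin M => (k:ℕ) ≤ (i:ℕ)), v k : ℝ) : EReal) * -U (σ i) (σ j)
  else 0

noncomputable def restCost (σ : Equiv.Perm (Fin M)) (v : Fin M → ℝ) (x : Fin M → Fin d → ℝ) :
    EReal :=
  ∑ i : Fin M, ((v i : ℝ) : EReal) * I (σ i) (x i)

noncomputable def cost (σ : Equiv.Perm (Fin M)) (p : (Fin M → ℝ) × (Fin M → Fin d → ℝ)) :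
    EReal :=
  routeCost U σ p.1 + restCost I σ p.1 p.2

noncomputable def costSublevelImage (K : Set (Fin d → ℝ)) (b : ℝ) : Set (Fin d → ℝ) :=
  ⋃ σ : Equiv.Perm (Fin M), weightedSum ''
    ((stdSimplex ℝ (Fin M) ×ˢ univ.pi fun _ => K) ∩ cost U I σ ⁻¹' Iic (b : EReal))

lemma JU_eq (z : Fin d → ℝ) : JU d M U I z = sInf {c | ∃ σ v x, (∀ i, v i ∈ Icc (0:ℝ) 1) ∧
    ∑ i, v i = 1 ∧ weightedSum (v, x) = z ∧ c = cost U I σ (v, x)} := rfl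

variable {U I}

lemma JU_le_cost (σ : Equiv.Perm (Fin M)) {v : Fin M → ℝ} (x : Fin M → Fin d → ℝ)
    (hv : v ∈ stdSimplex ℝ (Fin M)) : JU d M U I (weightedSum (v, x)) ≤ cost U I σ (v, x) :=
  sInf_le ⟨σ, v, x, mem_Icc_of_mem_stdSimplex hv, hv.2, rfl, rfl⟩

lemma exists_cost_lt_of_JU_lt {z : Fin d → ℝ} {b : EReal} (h : JU d M U I z < b) :
    ∃ σ v x, v ∈ stdSimplex ℝ (Fin M) ∧ weightedSum (v, x) = z ∧ cost U I σ (v, x) < b := by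
  obtain ⟨c, ⟨σ, v, x, hv, hv₁, hz, rfl⟩, hc⟩ := sInf_lt_iff.1 h
  exact ⟨σ, v, x, ⟨fun i => (hv i).1, hv₁⟩, hz, hc⟩

lemma routeCost_eq_sum (hU : ∀ i j, U i j ≤ 0) (σ : Equiv.Perm (Fin M)) {v : Fin M → ℝ}
    (hv : ∀ i, 0 ≤ v i) : routeCost U σ v = ∑ i, ∑ j, routeTerm U σ v i j := by
  have hS : ∀ i : Fin M, (0 : EReal) ≤
      ((∑ k ∈ univ.filter (fun k : Fin M => (k:ℕ) ≤ (i:ℕ)), v k : ℝ) : EReal) :=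
    fun i => EReal.coe_nonneg.2 (sum_nonneg fun k _ => hv k)
  have hterm : ∀ i j : Fin M, (if (j:ℕ) = (i:ℕ) + 1 then
      ((∑ k ∈ univ.filter (fun k : Fin M => (k:ℕ) ≤ (i:ℕ)), v k : ℝ) : EReal) * U (σ i) (σ j)
      else 0) ≤ 0 := fun i j => by
    split_ifs
    · exact mul_nonpos_of_nonneg_of_nonpos (hS i) (hU _ _)
    · rfl
  rw [routeCost, EReal.neg_sum_of_nonpos fun i _ => sum_nonpos fun j _ => hterm i j]
  refine sum_congr rfl fun i _ => ?_
  rw [EReal.neg_sum_of_nonpos fun j _ => hterm i j]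
  refine sum_congr rfl fun j _ => ?_
  rw [routeTerm, apply_ite Neg.neg, mul_neg, neg_zero]

lemma routeTerm_nonneg (hU : ∀ i j, U i j ≤ 0) (σ : Equiv.Perm (Fin M)) {v : Fin M → ℝ}
    (hv : ∀ i, 0 ≤ v i) (i j : Fin M) : 0 ≤ routeTerm U σ v i j := by
  unfold routeTerm
  split_ifs
  · exact mul_nonneg (EReal.coe_nonneg.2 (sum_nonneg fun k _ => hv k)) (EReal.neg_nonneg.2 (hU _ _))
  · rfl

lemma restCost_nonneg (hI : ∀ i x, 0 ≤ I i x) (σ : Equiv.Perm (Fin M)) {v : Fin M → ℝ}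
    (hv : ∀ i, 0 ≤ v i) (x : Fin M → Fin d → ℝ) : 0 ≤ restCost I σ v x :=
  sum_nonneg fun i _ => mul_nonneg (EReal.coe_nonneg.2 (hv i)) (hI _ _)

lemma routeCost_nonneg (hU : ∀ i j, U i j ≤ 0) (σ : Equiv.Perm (Fin M)) {v : Fin M → ℝ}
    (hv : ∀ i, 0 ≤ v i) : 0 ≤ routeCost U σ v := by
  rw [routeCost_eq_sum hU σ hv]
  exact sum_nonneg fun i _ => sum_nonneg fun j _ => routeTerm_nonneg hU σ hv i j

lemma cost_nonneg (hU : ∀ i j, U i j ≤ 0) (hI : ∀ i x, 0 ≤ I i x) (σ : Equiv.Perm (Fin M))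
    {p : (Fin M → ℝ) × (Fin M → Fin d → ℝ)} (hp : ∀ i, 0 ≤ p.1 i) : 0 ≤ cost U I σ p :=
  add_nonneg (routeCost_nonneg hU σ hp) (restCost_nonneg hI σ hp p.2)

lemma lowerSemicontinuousOn_routeCost (hU : ∀ i j, U i j ≤ 0) (σ : Equiv.Perm (Fin M)) :
    LowerSemicontinuousOn (routeCost U σ) {v | ∀ i, 0 ≤ v i} := by
  have hsum : LowerSemicontinuousOn (fun v => ∑ i, ∑ j, routeTerm U σ v i j)
      {v | ∀ i, 0 ≤ v i} := by
    refine lowerSemicontinuousOn_ereal_sum (fun i _ => lowerSemicontinuousOn_ereal_sum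
      (fun j _ => ?_) fun j _ v hv => routeTerm_nonneg hU σ hv i j)
      fun i _ v hv => sum_nonneg fun j _ => routeTerm_nonneg hU σ hv i j
    unfold routeTerm
    split_ifs
    · refine LowerSemicontinuousOn.ereal_mul
        (continuous_coe_real_ereal.comp (by fun_prop)).continuousOn.lowerSemicontinuousOn
        lowerSemicontinuousOn_const (fun v hv => ?_) fun _ _ => EReal.neg_nonneg.2 (hU _ _)
      exact EReal.coe_nonneg.2 (sum_nonneg fun k _ => hv k)
    · exact lowerSemicontinuousOn_const
  refine fun v hv => LowerSemicontinuousWithinAt.congr_of_eventuallyEq (hsum v hv) hv ?_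
  filter_upwards [self_mem_nhdsWithin] with w hw using (routeCost_eq_sum hU σ hw).symm

lemma lowerSemicontinuousOn_cost (hU : ∀ i j, U i j ≤ 0) (hI : ∀ i x, 0 ≤ I i x)
    (hIlsc : ∀ i, LowerSemicontinuous (I i)) (σ : Equiv.Perm (Fin M)) :
    LowerSemicontinuousOn (cost U I σ) {p | ∀ i, 0 ≤ p.1 i} := by
  refine LowerSemicontinuousOn.ereal_add ((lowerSemicontinuousOn_routeCost hU σ).comp
    continuous_fst.continuousOn fun p hp => hp) ?_
    (fun p hp => routeCost_nonneg hU σ hp)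
    fun p hp => restCost_nonneg hI σ hp p.2
  refine lowerSemicontinuousOn_ereal_sum (fun i _ => ?_)
    fun i _ p hp => mul_nonneg (EReal.coe_nonneg.2 (hp i)) (hI _ _)
  exact LowerSemicontinuousOn.ereal_mul
    (continuous_coe_real_ereal.comp (by fun_prop)).continuousOn.lowerSemicontinuousOn
    (((hIlsc (σ i)).comp (by fun_prop)).lowerSemicontinuousOn _)
    (fun p hp => EReal.coe_nonneg.2 (hp i)) fun p _ => hI _ _

lemma continuous_weightedSum :
    Continuous (weightedSum : (Fin M → ℝ) × (Fin M → Fin d → ℝ) → Fin d → ℝ) := by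
  unfold weightedSum; fun_prop

lemma isCompact_costSublevelImage (hU : ∀ i j, U i j ≤ 0) (hI : ∀ i x, 0 ≤ I i x)
    (hIlsc : ∀ i, LowerSemicontinuous (I i)) {K : Set (Fin d → ℝ)} (hK : IsCompact K) (b : ℝ) :
    IsCompact (costSublevelImage U I K b) :=
  isCompact_iUnion fun σ => (((lowerSemicontinuousOn_cost hU hI hIlsc σ).mono
    fun _ hp i => hp.1.1 i).isCompact_inter_preimage_Iic
      ((isCompact_stdSimplex _ _).prod (isCompact_univ_pi fun _ => hK)) _).image
    continuous_weightedSum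

lemma costSublevelImage_subset {K : Set (Fin d → ℝ)} (hK : Convex ℝ K) (b : ℝ) :
    costSublevelImage U I K b ⊆ K := by
  simp only [costSublevelImage, iUnion_subset_iff, image_subset_iff]
  rintro σ ⟨v, x⟩ ⟨⟨hv, hx⟩, -⟩
  exact hK.sum_mem (fun i _ => hv.1 i) hv.2 fun i _ => hx i (mem_univ i)

lemma JU_le_of_mem_costSublevelImage {K : Set (Fin d → ℝ)} {b : ℝ} {z : Fin d → ℝ}
    (hz : z ∈ costSublevelImage U I K b) : JU d M U I z ≤ b := by
  obtain ⟨σ, ⟨v, x⟩, ⟨⟨hv, -⟩, hc⟩, rfl⟩ := mem_iUnion.1 hz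
  exact (JU_le_cost σ x hv).trans hc

lemma weightedSum_congr {v : Fin M → ℝ} {x x' : Fin M → Fin d → ℝ}
    (h : ∀ i, v i ≠ 0 → x i = x' i) : weightedSum (v, x) = weightedSum (v, x') :=
  sum_congr rfl fun i _ => by by_cases hi : v i = 0 <;> simp [hi, h i]

lemma cost_congr (σ : Equiv.Perm (Fin M)) {v : Fin M → ℝ} {x x' : Fin M → Fin d → ℝ}
    (h : ∀ i, v i ≠ 0 → x i = x' i) : cost U I σ (v, x) = cost U I σ (v, x') :=
  congrArg (routeCost U σ v + ·) <| sum_congr rfl fun i _ => by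
    by_cases hi : v i = 0 <;> simp [hi, h i]

lemma lt_top_of_cost_lt (hU : ∀ i j, U i j ≤ 0) (hI : ∀ i x, 0 ≤ I i x)
    {σ : Equiv.Perm (Fin M)} {v : Fin M → ℝ} {x : Fin M → Fin d → ℝ} {b : ℝ}
    (hv : ∀ i, 0 ≤ v i) (hc : cost U I σ (v, x) < b) {i : Fin M} (hi : 0 < v i) :
    I (σ i) (x i) < ⊤ := by
  have hle : (v i : EReal) * I (σ i) (x i) ≤ cost U I σ (v, x) :=
    calc (v i : EReal) * I (σ i) (x i) ≤ restCost I σ v x :=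
          single_le_sum (f := fun k => (v k : EReal) * I (σ k) (x k))
            (fun k _ => mul_nonneg (EReal.coe_nonneg.2 (hv k)) (hI _ _)) (mem_univ i)
      _ ≤ cost U I σ (v, x) := le_add_of_nonneg_left (routeCost_nonneg hU σ hv)
  refine lt_top_iff_ne_top.2 fun htop => ?_
  rw [htop, EReal.coe_mul_top_of_pos hi] at hle
  exact not_top_lt (hle.trans_lt hc)

lemma mem_costSublevelImage_of_JU_lt (hU : ∀ i j, U i j ≤ 0) (hI : ∀ i x, 0 ≤ I i x)
    {K : Set (Fin d → ℝ)} (hQ : ∀ i, {x | I i x < ⊤} ⊆ K) {b : ℝ} {z : Fin d → ℝ}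
    (h : JU d M U I z < b) : z ∈ costSublevelImage U I K b := by
  obtain ⟨σ, v, x, hv, rfl, hc⟩ := exists_cost_lt_of_JU_lt h
  have hxK : ∀ i, 0 < v i → x i ∈ K := fun i hi => hQ _ (lt_top_of_cost_lt hU hI hv.1 hc hi)
  obtain ⟨j, hj⟩ : ∃ j, 0 < v j := by
    by_contra! hnonpos
    have : ∑ i, v i ≤ 0 := sum_nonpos fun i _ => hnonpos i
    linarith [hv.2]
  -- points carrying zero weight are irrelevant, so move them into `K`
  set x' : Fin M → Fin d → ℝ := fun i => if 0 < v i then x i else x j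
  have hx' : ∀ i, v i ≠ 0 → x i = x' i := fun i hi => (if_pos ((hv.1 i).lt_of_ne' hi)).symm
  refine mem_iUnion.2 ⟨σ, (v, x'), ⟨⟨hv, fun i _ => ?_⟩, ?_⟩, (weightedSum_congr hx').symm⟩
  · by_cases hi : 0 < v i
    · simpa [x', hi] using hxK i hi
    · simpa [x', hi] using hxK j hj
  · rw [Set.mem_preimage, Set.mem_Iic, ← cost_congr σ hx']
    exact hc.le

lemma JU_nonneg (hU : ∀ i j, U i j ≤ 0) (hI : ∀ i x, 0 ≤ I i x) (z : Fin d → ℝ) :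
    0 ≤ JU d M U I z := by
  rw [JU_eq]
  refine le_sInf ?_
  rintro _ ⟨σ, v, x, hv, -, -, rfl⟩
  exact cost_nonneg hU hI σ fun i => (hv i).1

lemma JU_le (i : Fin M) (z : Fin d → ℝ) : JU d M U I z ≤ I i z := by
  -- all weight on the last site `L`, where `σ` visits `i`; the partial sums before `L` vanish
  set L : Fin M := ⟨M - 1, by have := i.isLt; omega⟩
  have hroute : routeCost U (Equiv.swap L i) (Pi.single L 1) = 0 := by
    rw [routeCost, sum_eq_zero fun i' _ => sum_eq_zero fun j _ => ?_, neg_zero]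
    split_ifs with hj
    · have hS : ∑ k ∈ univ.filter (fun k : Fin M => (k:ℕ) ≤ (i':ℕ)),
          (Pi.single L 1 : Fin M → ℝ) k = 0 :=
        sum_eq_zero fun k hk => Pi.single_eq_of_ne (fun hkL => ?_) _
      · rw [hS, EReal.coe_zero, zero_mul]
      have hki := (mem_filter.1 hk).2
      have := j.isLt
      simp only [hkL, L] at hki
      omega
    · rfl
  calc JU d M U I z = JU d M U I (weightedSum (Pi.single L 1, fun _ => z)) := by
        simp [weightedSum]
    _ ≤ cost U I (Equiv.swap L i) (Pi.single L 1, fun _ => z) :=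
        JU_le_cost _ _ (single_mem_stdSimplex ℝ L)
    _ = I i z := by
        simp [cost, hroute, restCost, Pi.single_apply, apply_ite Real.toEReal, ite_mul]

end RateFunction

theorem stmt12_general (d M : ℕ)
    (r : ℝ) (U : Fin M → Fin M → EReal) (hU : ∀ i j, U i j ≤ 0)
    (I : Fin M → (Fin d → ℝ) → EReal)
    (hInonneg : ∀ i x, 0 ≤ I i x)
    (hIlsc : ∀ i, LowerSemicontinuous (I i))
    (hQsub : ∀ i, {x | I i x < ⊤} ⊆ {x : Fin d → ℝ | ∀ j, |x j| ≤ r}) :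
    (∀ z, 0 ≤ JU d M U I z)
    ∧ LowerSemicontinuous (JU d M U I)
    ∧ (∀ a : ℝ, IsCompact {z | JU d M U I z ≤ (a : EReal)})
    ∧ (∀ z, ∀ i, JU d M U I z ≤ I i z)
    ∧ {z | JU d M U I z < ⊤} ⊆ {x : Fin d → ℝ | ∀ j, |x j| ≤ r} := by
  have hcube : {x : Fin d → ℝ | ∀ j, |x j| ≤ r} = univ.pi fun _ => Icc (-r) r := by
    ext x
    show (∀ j, |x j| ≤ r) ↔ _
    simp only [mem_univ_pi, Set.mem_Icc, abs_le]
  rw [hcube] at hQsub ⊢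
  have hlevel : ∀ a : ℝ, IsCompact {z | JU d M U I z ≤ a} :=
    EReal.isCompact_setOf_le_of_forall_lt
      (isCompact_costSublevelImage hU hInonneg hIlsc (isCompact_univ_pi fun _ => isCompact_Icc))
      (fun _ _ => mem_costSublevelImage_of_JU_lt hU hInonneg hQsub)
      fun _ _ => JU_le_of_mem_costSublevelImage
  refine ⟨JU_nonneg hU hInonneg,
    EReal.lowerSemicontinuous_of_isClosed_setOf_le_coe fun a => (hlevel a).isClosed,
    hlevel, fun z i => JU_le i z, fun z hz => ?_⟩
  obtain ⟨b, hb, -⟩ := EReal.lt_iff_exists_real_btwn.1 hz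
  exact costSublevelImage_subset (convex_pi fun _ _ => convex_Icc (-r) r) b
    (mem_costSublevelImage_of_JU_lt hU hInonneg hQsub hb)

theorem stmt12 (d M : ℕ) (hM : 1 ≤ M)
    (r : ℝ) (U : Fin M → Fin M → EReal) (hU : ∀ i j, U i j ≤ 0)
    (I : Fin M → (Fin d → ℝ) → EReal)
    (hInonneg : ∀ i x, 0 ≤ I i x)
    (hIlsc : ∀ i, LowerSemicontinuous (I i))
    (hIgood : ∀ i, ∀ a : ℝ, IsCompact {x | I i x ≤ (a : EReal)})
    (hQne : ∀ i, {x | I i x < ⊤}.Nonempty)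
    (hQcpt : ∀ i, IsCompact {x | I i x < ⊤})
    (hQsub : ∀ i, {x | I i x < ⊤} ⊆ {x : Fin d → ℝ | ∀ j, |x j| ≤ r}) :
    (∀ z, 0 ≤ JU d M U I z)
    ∧ LowerSemicontinuous (JU d M U I)
    ∧ (∀ a : ℝ, IsCompact {z | JU d M U I z ≤ (a : EReal)})
    ∧ (∀ z, ∀ i, JU d M U I z ≤ I i z)
    ∧ {z | JU d M U I z < ⊤} ⊆ {x : Fin d → ℝ | ∀ j, |x j| ≤ r} :=
  stmt12_general d M r U hU I hInonneg hIlsc hQsub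
end

section
/- Consider Σ = {0,1}, f(0) = 1, f(1) = 0, initial distribution π = (1/2, 1/2), and the nonhomogeneous Markov chain with transition matrices P_n equal to A_n for n even and B_n for n odd, where A_k = [[1−2^{−k}, 2^{−k}],[0,1]] and B_k = [[1−3^{−k}, 3^{−k}],[0,1]]. Let Z_n = (1/n) Σ_{i=1}^n f(X_i). Then for every interval Γ = (a,b] with 0 < a < b < 1, lim_{n→∞} (1/n) log P_π(Z_n ∈ Γ) = −a log 2. -/
open Filter Topology
open scoped Classical

/-- `alp k` is `2^{-k}` for `k` even and `3^{-k}` for `k` odd. -/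
noncomputable def alp (k : ℕ) : ℝ := if Even k then (1/2 : ℝ) ^ k else (1/3 : ℝ) ^ k

/-- The time-`k` transition matrix on `{0,1}`: `[[1 - alp k, alp k], [0, 1]]`. -/
noncomputable def Pm (k : ℕ) : Fin 2 → Fin 2 → ℝ := fun s t =>
  if s = 1 then (if t = 1 then 1 else 0)
  else if t = 0 then 1 - alp k else alp k

/-- Weight of the path `ω = (X₀, X₁, …, X_n)` under the uniform initial distribution
`π = (1/2, 1/2)` and transition matrices `Pm 1, …, Pm n`. -/
noncomputable def wt (n : ℕ) (ω : Fin (n+1) → Fin 2) : ℝ :=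
  (1/2 : ℝ) * ∏ i : Fin n, Pm ((i : ℕ) + 1) (ω i.castSucc) (ω i.succ)

/-- The empirical average `Z_n = (1/n) ∑_{i=1}^n f(X_i)` with `f 0 = 1`, `f 1 = 0`. -/
noncomputable def Zn (n : ℕ) (ω : Fin (n+1) → Fin 2) : ℝ :=
  (1 / (n:ℝ)) * ∑ i : Fin n, (if ω i.succ = 0 then (1:ℝ) else 0)

/-- The probability `P_π(Z_n ∈ Γ)`, as a sum of path weights. -/
noncomputable def muZ (n : ℕ) (Γ : Set ℝ) : ℝ :=
  ∑ ω ∈ Finset.univ.filter (fun ω : Fin (n+1) → Fin 2 => Zn n ω ∈ Γ), wt n ω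

/-!
State `1` is absorbing, so a path of positive weight is monotone: it is the path `switchPath n j`
that jumps from `0` to `1` at time `j`, where `Z_n = (j - 1) / n` and the weight lies between
`e⁻² · 2⁻¹ · 2⁻ʲ` (for even `j`, since `∏ (1 - 2⁻ᵏ) ≥ e⁻²`) and `alp j ≤ 2⁻ʲ`.
As there are at most `n + 2` such paths, `P(Z_n ∈ (a, b]) ≤ (n + 2) 2^{-na}`, and an even `j`
with `j - 1 ∈ (na, na + 3]` gives `P(Z_n ∈ (a, b]) ≥ e⁻² 2^{-na-5}`.
-/

open Real

lemma alp_le_half_pow (k : ℕ) : alp k ≤ (1/2 : ℝ) ^ k := by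
  unfold alp
  split
  · exact le_rfl
  · exact pow_le_pow_left₀ (by norm_num) (by norm_num) k

lemma alp_of_even {k : ℕ} (hk : Even k) : alp k = (1/2 : ℝ) ^ k := if_pos hk

lemma alp_nonneg (k : ℕ) : 0 ≤ alp k := by
  unfold alp
  split <;> positivity

lemma alp_le_one (k : ℕ) : alp k ≤ 1 :=
  (alp_le_half_pow k).trans (pow_le_one₀ (by norm_num) (by norm_num))

lemma Pm_nonneg (k : ℕ) (s t : Fin 2) : 0 ≤ Pm k s t := by
  unfold Pm
  split_ifs <;> linarith [alp_nonneg k, alp_le_one k]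

lemma Pm_le_one (k : ℕ) (s t : Fin 2) : Pm k s t ≤ 1 := by
  unfold Pm
  split_ifs <;> linarith [alp_nonneg k, alp_le_one k]

lemma wt_nonneg (n : ℕ) (ω : Fin (n+1) → Fin 2) : 0 ≤ wt n ω :=
  mul_nonneg (by norm_num) (Finset.prod_nonneg fun _ _ => Pm_nonneg _ _ _)

lemma wt_le_Pm (n : ℕ) (ω : Fin (n+1) → Fin 2) (i : Fin n) :
    wt n ω ≤ Pm ((i : ℕ) + 1) (ω i.castSucc) (ω i.succ) := by
  unfold wt
  rw [← Finset.mul_prod_erase _ _ (Finset.mem_univ i)]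
  have hrest : ∏ k ∈ Finset.univ.erase i, Pm ((k : ℕ) + 1) (ω k.castSucc) (ω k.succ) ≤ 1 :=
    Finset.prod_le_one (fun _ _ => Pm_nonneg _ _ _) (fun _ _ => Pm_le_one _ _ _)
  nlinarith [Pm_nonneg ((i : ℕ) + 1) (ω i.castSucc) (ω i.succ),
    Finset.prod_nonneg fun k (_ : k ∈ Finset.univ.erase i) =>
      Pm_nonneg ((k : ℕ) + 1) (ω k.castSucc) (ω k.succ)]

lemma monotone_of_wt_ne_zero {n : ℕ} {ω : Fin (n+1) → Fin 2} (h : wt n ω ≠ 0) : Monotone ω := by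
  refine Fin.monotone_iff_le_succ.2 fun i => ?_
  by_contra hlt
  have hstep : ω i.castSucc = 1 ∧ ω i.succ = 0 := by omega
  exact h (mul_eq_zero_of_right _
    (Finset.prod_eq_zero (Finset.mem_univ i) (by simp [Pm, hstep.1, hstep.2])))

def switchPath (n j : ℕ) : Fin (n+1) → Fin 2 := fun i => if (i : ℕ) < j then 0 else 1

def numZeros {n : ℕ} (ω : Fin (n+1) → Fin 2) : ℕ := (Finset.univ.filter fun i => ω i = 0).card

lemma numZeros_le {n : ℕ} (ω : Fin (n+1) → Fin 2) : numZeros ω ≤ n + 1 :=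
  (Finset.card_filter_le _ _).trans (Finset.card_fin _).le

lemma lt_numZeros_iff {n : ℕ} {ω : Fin (n+1) → Fin 2} (hω : Monotone ω) (i : Fin (n+1)) :
    (i : ℕ) < numZeros ω ↔ ω i = 0 := by
  constructor
  · intro hi
    by_contra h1
    have hsub : (Finset.univ.filter fun k => ω k = 0) ⊆ Finset.Iio i := fun k hk => by
      have hk0 := (Finset.mem_filter.1 hk).2
      refine Finset.mem_Iio.2 (lt_of_not_ge fun hik => ?_)
      have := hω hik
      omega
    have := Finset.card_le_card hsub
    rw [Fin.card_Iio] at this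
    exact absurd hi (not_lt.2 this)
  · intro h0
    have hsub : Finset.Iic i ⊆ Finset.univ.filter fun k => ω k = 0 := fun k hk =>
      Finset.mem_filter.2 ⟨Finset.mem_univ k, by have := hω (Finset.mem_Iic.1 hk); omega⟩
    have := Finset.card_le_card hsub
    rw [Fin.card_Iic] at this
    exact this

lemma eq_switchPath_of_monotone {n : ℕ} {ω : Fin (n+1) → Fin 2} (hω : Monotone ω) :
    ω = switchPath n (numZeros ω) := by
  funext i
  have := lt_numZeros_iff hω i
  simp only [switchPath]
  split_ifs <;> omega

lemma Zn_switchPath {n j : ℕ} (hj : j ≤ n + 1) :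
    Zn n (switchPath n j) = ((j - 1 : ℕ) : ℝ) / n := by
  have hcount : (Finset.univ.filter fun i : Fin n => (i : ℕ) < j - 1).card = j - 1 := by
    rw [Fin.card_filter_val_lt]
    omega
  simp only [Zn, switchPath, Fin.val_succ]
  simp_rw [show ∀ i : ℕ, (if i + 1 < j then (0 : Fin 2) else 1) = 0 ↔ i < j - 1 by
    intro i; split_ifs <;> omega]
  rw [Finset.sum_boole, hcount, one_div_mul_eq_div]

lemma Pm_switchPath (n j : ℕ) (i : Fin n) :
    Pm ((i : ℕ) + 1) (switchPath n j i.castSucc) (switchPath n j i.succ) =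
      if (i : ℕ) + 1 < j then 1 - alp ((i : ℕ) + 1)
      else if (i : ℕ) + 1 = j then alp j else 1 := by
  simp only [Pm, switchPath, Fin.val_succ, Fin.val_castSucc]
  split_ifs <;> first | rfl | omega | simp_all

lemma wt_switchPath_le {n j : ℕ} (hj : 1 ≤ j) (hjn : j ≤ n) : wt n (switchPath n j) ≤ alp j := by
  have h := wt_le_Pm n (switchPath n j) ⟨j - 1, by omega⟩
  rwa [Pm_switchPath, if_neg (by simp; omega), if_pos (by simp; omega)] at h

lemma exp_neg_two_mul_le_one_sub {x : ℝ} (h0 : 0 ≤ x) (h1 : x ≤ 1/2) : exp (-(2 * x)) ≤ 1 - x := by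
  rw [exp_neg, inv_le_iff_one_le_mul₀ (exp_pos _)]
  nlinarith [add_one_le_exp (2 * x)]

lemma exp_neg_two_le_prod_one_sub {ι : Type*} (s : Finset ι) (x : ι → ℝ)
    (h0 : ∀ i ∈ s, 0 ≤ x i) (h1 : ∀ i ∈ s, x i ≤ 1/2) (hsum : ∑ i ∈ s, x i ≤ 1) :
    exp (-2) ≤ ∏ i ∈ s, (1 - x i) :=
  calc exp (-2) ≤ exp (∑ i ∈ s, -(2 * x i)) := by
        rw [Finset.sum_neg_distrib, ← Finset.mul_sum]
        gcongr
        linarith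
    _ = ∏ i ∈ s, exp (-(2 * x i)) := exp_sum _ _
    _ ≤ ∏ i ∈ s, (1 - x i) := Finset.prod_le_prod (fun _ _ => (exp_pos _).le)
        fun i hi => exp_neg_two_mul_le_one_sub (h0 i hi) (h1 i hi)

lemma half_pow_succ_le_half (i : ℕ) : (1/2 : ℝ) ^ (i + 1) ≤ 1/2 :=
  (pow_le_pow_of_le_one (by norm_num) (by norm_num) (by omega)).trans_eq (pow_one _)

lemma sum_half_pow_succ_le_one (n : ℕ) : ∑ i : Fin n, (1/2 : ℝ) ^ ((i : ℕ) + 1) ≤ 1 := by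
  rw [Fin.sum_univ_eq_sum_range (fun i => (1/2 : ℝ) ^ (i + 1))]
  simp_rw [pow_succ, ← Finset.sum_mul]
  linarith [sum_geometric_two_le n]

lemma wt_switchPath_ge {n j : ℕ} (hj : 1 ≤ j) (hjn : j ≤ n) (heven : Even j) :
    exp (-2) * (1/2) * (1/2 : ℝ) ^ j ≤ wt n (switchPath n j) := by
  set i₀ : Fin n := ⟨j - 1, by omega⟩
  set f : Fin n → ℝ := fun i => Pm ((i : ℕ) + 1) (switchPath n j i.castSucc) (switchPath n j i.succ)
  have hf₀ : f i₀ = (1/2 : ℝ) ^ j := by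
    simp only [f, Pm_switchPath, i₀]
    rw [if_neg (by omega), if_pos (by omega), alp_of_even heven]
  have hrest : exp (-2) ≤ ∏ i ∈ Finset.univ.erase i₀, f i := by
    refine (exp_neg_two_le_prod_one_sub _ (fun i : Fin n => (1/2 : ℝ) ^ ((i : ℕ) + 1))
      (fun _ _ => by positivity) (fun i _ => ?_) ?_).trans (Finset.prod_le_prod ?_ ?_)
    · exact half_pow_succ_le_half _
    · exact (Finset.sum_le_sum_of_subset_of_nonneg (Finset.erase_subset _ _)
        fun _ _ _ => by positivity).trans (sum_half_pow_succ_le_one n)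
    · intro i _
      linarith [half_pow_succ_le_half i]
    · intro i hi
      have hi₀ : (i : ℕ) + 1 ≠ j := fun h => Finset.ne_of_mem_erase hi (Fin.ext (by simp [i₀]; omega))
      simp only [f, Pm_switchPath, if_neg hi₀]
      split_ifs
      · linarith [alp_le_half_pow ((i : ℕ) + 1)]
      · linarith [pow_pos (by norm_num : (0 : ℝ) < 1/2) ((i : ℕ) + 1)]
  have hwt : wt n (switchPath n j) = 1/2 * (f i₀ * ∏ i ∈ Finset.univ.erase i₀, f i) := by
    rw [Finset.mul_prod_erase _ _ (Finset.mem_univ i₀)]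
    rfl
  rw [hwt, hf₀]
  nlinarith [pow_pos (by norm_num : (0 : ℝ) < 1/2) j]

lemma muZ_le_of_wt_le {n : ℕ} {Γ : Set ℝ} {c : ℝ} (hc : 0 ≤ c)
    (hbound : ∀ ω, Zn n ω ∈ Γ → wt n ω ≠ 0 → wt n ω ≤ c) : muZ n Γ ≤ (n + 2) * c := by
  set S := (Finset.univ.filter fun ω : Fin (n+1) → Fin 2 => Zn n ω ∈ Γ).filter (wt n · ≠ 0)
  have hS : S ⊆ (Finset.range (n + 2)).image (switchPath n) := fun ω hω => by
    obtain ⟨hΓ, hw⟩ := Finset.mem_filter.1 hω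
    exact Finset.mem_image.2 ⟨numZeros ω, Finset.mem_range.2 (Nat.lt_succ_of_le (numZeros_le ω)),
      (eq_switchPath_of_monotone (monotone_of_wt_ne_zero hw)).symm⟩
  have hcard : (S.card : ℝ) ≤ n + 2 := by
    exact_mod_cast (Finset.card_le_card hS).trans (Finset.card_image_le.trans (Finset.card_range _).le)
  calc muZ n Γ = ∑ ω ∈ S, wt n ω := (Finset.sum_filter_ne_zero _).symm
    _ ≤ S.card • c := Finset.sum_le_card_nsmul _ _ _ fun ω hω => by
        obtain ⟨hΓ, hw⟩ := Finset.mem_filter.1 hω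
        exact hbound ω (Finset.mem_filter.1 hΓ).2 hw
    _ ≤ (n + 2) * c := by rw [nsmul_eq_mul]; gcongr

lemma wt_le_muZ {n : ℕ} {Γ : Set ℝ} {ω : Fin (n+1) → Fin 2} (hω : Zn n ω ∈ Γ) : wt n ω ≤ muZ n Γ :=
  Finset.single_le_sum (fun ω _ => wt_nonneg n ω) (Finset.mem_filter.2 ⟨Finset.mem_univ _, hω⟩)

lemma half_pow_eq_exp (j : ℕ) : (1/2 : ℝ) ^ j = exp (-(j * log 2)) := by
  rw [← exp_log (by positivity : (0 : ℝ) < (1/2) ^ j), log_pow, one_div, log_inv, mul_neg]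

lemma numZeros_mem_of_Zn_mem_Ioc {n : ℕ} {a b : ℝ} (ha : 0 ≤ a) (hb : b < 1)
    {ω : Fin (n+1) → Fin 2} (hω : Monotone ω) (hZ : Zn n ω ∈ Set.Ioc a b) :
    1 ≤ numZeros ω ∧ numZeros ω ≤ n ∧ n * a < numZeros ω := by
  rw [eq_switchPath_of_monotone hω, Zn_switchPath (numZeros_le ω)] at hZ
  set j := numZeros ω
  obtain ⟨hlo, hhi⟩ := hZ
  have hn : (0 : ℝ) < n := Nat.cast_pos.2 <| Nat.pos_of_ne_zero fun h => by
    simp only [h, Nat.cast_zero, div_zero] at hlo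
    linarith
  rw [lt_div_iff₀ hn] at hlo
  rw [div_le_iff₀ hn] at hhi
  have hj : 0 < j - 1 := by exact_mod_cast (by nlinarith : (0 : ℝ) < (j - 1 : ℕ))
  have hjn : j - 1 < n := by exact_mod_cast (by nlinarith : ((j - 1 : ℕ) : ℝ) < n)
  have hj' : ((j - 1 : ℕ) : ℝ) ≤ j := by exact_mod_cast Nat.sub_le j 1
  exact ⟨by omega, by omega, by linarith⟩

lemma muZ_Ioc_le {a b : ℝ} (ha : 0 ≤ a) (hb : b < 1) (n : ℕ) :
    muZ n (Set.Ioc a b) ≤ (n + 2) * exp (-(n * a * log 2)) := by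
  refine muZ_le_of_wt_le (exp_pos _).le fun ω hZ hw => ?_
  have hω := monotone_of_wt_ne_zero hw
  obtain ⟨hj, hjn, hja⟩ := numZeros_mem_of_Zn_mem_Ioc ha hb hω hZ
  calc wt n ω = wt n (switchPath n (numZeros ω)) := by rw [← eq_switchPath_of_monotone hω]
    _ ≤ alp (numZeros ω) := wt_switchPath_le hj hjn
    _ ≤ (1/2 : ℝ) ^ numZeros ω := alp_le_half_pow _
    _ = exp (-(numZeros ω * log 2)) := half_pow_eq_exp _
    _ ≤ exp (-(n * a * log 2)) := by gcongr

lemma exists_even_nat_mem_Ioc {x : ℝ} (hx : 0 ≤ x) :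
    ∃ j : ℕ, Even j ∧ (j : ℝ) ∈ Set.Ioc (x + 1) (x + 4) := by
  refine ⟨2 * (⌊x / 2⌋₊ + 2), even_two_mul _, ?_, ?_⟩ <;> push_cast
  · linarith [Nat.lt_floor_add_one (x / 2)]
  · linarith [Nat.floor_le (div_nonneg hx zero_le_two)]

lemma exp_le_muZ_Ioc {a b : ℝ} (ha : 0 ≤ a) (hb : b < 1) {n : ℕ} (hn : 3 ≤ n * (b - a)) :
    exp (-(2 + 5 * log 2) - n * a * log 2) ≤ muZ n (Set.Ioc a b) := by
  have hn0 : (0 : ℝ) < n := by nlinarith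
  obtain ⟨j, heven, hjlo, hjhi⟩ := exists_even_nat_mem_Ioc (mul_nonneg hn0.le ha)
  have hj : 1 ≤ j := by exact_mod_cast (by nlinarith : (1 : ℝ) ≤ j)
  have hjn : j ≤ n := Nat.lt_succ_iff.1 <| by
    exact_mod_cast (by nlinarith [mul_lt_mul_of_pos_left hb hn0] : (j : ℝ) < n + 1)
  have hZ : Zn n (switchPath n j) ∈ Set.Ioc a b := by
    rw [Zn_switchPath (by omega), Nat.cast_sub hj, Nat.cast_one, Set.mem_Ioc,
      lt_div_iff₀ hn0, div_le_iff₀ hn0]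
    constructor <;> nlinarith
  calc exp (-(2 + 5 * log 2) - n * a * log 2)
      ≤ exp (-2) * exp (-log 2) * exp (-(j * log 2)) := by
        rw [← exp_add, ← exp_add]
        gcongr
        nlinarith [log_pos one_lt_two]
    _ = exp (-2) * (1/2) * (1/2 : ℝ) ^ j := by
        rw [half_pow_eq_exp, exp_neg (log 2), exp_log two_pos, one_div]
    _ ≤ wt n (switchPath n j) := wt_switchPath_ge hj hjn heven
    _ ≤ muZ n (Set.Ioc a b) := wt_le_muZ hZ

lemma tendsto_log_add_two_div_atTop :
    Tendsto (fun n : ℕ => log ((n : ℝ) + 2) / n) atTop (𝓝 0) := by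
  have h := (tendsto_pow_log_div_mul_add_atTop 1 (-2) 1 one_ne_zero).comp
    (tendsto_atTop_add_const_right _ 2 tendsto_natCast_atTop_atTop)
  refine h.congr fun n => ?_
  simp

theorem stmt19 (a b : ℝ) (ha : 0 < a) (hab : a < b) (hb : b < 1) :
    Tendsto (fun n : ℕ => (1 / (n:ℝ)) * Real.log (muZ n (Set.Ioc a b))) atTop
      (nhds (-(a * Real.log 2))) := by
  have hlarge : ∀ᶠ n : ℕ in atTop, 3 ≤ (n : ℝ) * (b - a) :=
    (tendsto_natCast_atTop_atTop.atTop_mul_const (sub_pos.2 hab)).eventually_ge_atTop 3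
  have hlower : Tendsto (fun n : ℕ => -(2 + 5 * log 2) / n - a * log 2) atTop
      (𝓝 (-(a * log 2))) := by
    simpa using (tendsto_const_div_atTop_nhds_zero_nat _).sub_const (a * log 2)
  have hupper : Tendsto (fun n : ℕ => log ((n : ℝ) + 2) / n - a * log 2) atTop
      (𝓝 (-(a * log 2))) := by
    simpa using tendsto_log_add_two_div_atTop.sub_const (a * log 2)
  refine tendsto_of_tendsto_of_tendsto_of_le_of_le' hlower hupper ?_ ?_ <;>
    filter_upwards [hlarge] with n hn
  · have hn0 : (0 : ℝ) < n := by nlinarith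
    have h := log_le_log (exp_pos _) (exp_le_muZ_Ioc ha.le hb hn)
    rw [log_exp] at h
    rw [div_sub' hn0.ne', one_div_mul_eq_div]
    exact div_le_div_of_nonneg_right (by linarith) hn0.le
  · have hn0 : (0 : ℝ) < n := by nlinarith
    have hpos := (exp_pos _).trans_le (exp_le_muZ_Ioc ha.le hb hn)
    have h := log_le_log hpos (muZ_Ioc_le ha.le hb n)
    rw [log_mul (by positivity) (exp_pos _).ne', log_exp] at h
    rw [div_sub' hn0.ne', one_div_mul_eq_div]
    exact div_le_div_of_nonneg_right (by linarith) hn0.le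
end
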